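/- In the BFB length chain, if L_n < L_m for some n > m, then (in the folded structure interpretation) all copies of the m-th fold are excised; formally: the minimum distance of any copy of the m-th fold to the ends of the structure after step n is at least L_m/2 as long as L_j ≥ L_m for all m < j ≤ n, and an event with L_n < L_m deletes all copies. Consequently the set of surviving fold lengths in a sequence L_1,...,L_N forms an increasing subsequence in the order they occurred. -/
import Mathlib


/-- Positions of the copies of the `m`-th fold, `k` steps after its creation.
After step `m` the structure is `[0, Ls m]` with the fold at its midpoint
`Ls m / 2`.  At step `m + k + 1` a break occurs at `Ls (m+k+1) / 2`, the piece
`[0, Ls (m+k+1)/2]` is kept and reflected to form `[0, Ls (m+k+1)]`: a copy at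
distance `d` survives iff `d < Ls (m+k+1)/2`, producing copies at `d` and
`Ls (m+k+1) − d`. -/
def foldCopies (Ls : ℕ → ℝ) (m : ℕ) : ℕ → Set ℝ
  | 0 => {Ls m / 2}
  | k + 1 =>
      {d | d ∈ foldCopies Ls m k ∧ d < Ls (m + k + 1) / 2} ∪
        (fun d => Ls (m + k + 1) - d) ''
          {d | d ∈ foldCopies Ls m k ∧ d < Ls (m + k + 1) / 2}

/-- Survival criterion for BFB folds.  Suppose all lengths are positive,
each step at most doubles the length, and the lengths are distinct.  Then:
(1) as long as every later length exceeds `Ls m`, copies of the `m`-th fold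
survive, the minimum distance of any copy to the ends being exactly `Ls m / 2`;
(2) if some later length `Ls j < Ls m` occurs, all copies of the `m`-th fold
are excised;
(3) consequently the folds surviving in a final structure form an increasing
subsequence of lengths, in the order they occurred. -/
theorem bfb_fold_survival (Ls : ℕ → ℝ)
    (hpos : ∀ j, 0 < Ls j)
    (hstep : ∀ j, Ls (j + 1) < 2 * Ls j)
    (hinj : Function.Injective Ls) :
    (∀ m k, (∀ j, m < j → j ≤ m + k → Ls m < Ls j) →
      Ls m / 2 ∈ foldCopies Ls m k ∧
        ∀ d ∈ foldCopies Ls m k, Ls m / 2 ≤ d ∧ d ≤ Ls (m + k) - Ls m / 2) ∧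
    (∀ m k j, m < j → j ≤ m + k → Ls j < Ls m → foldCopies Ls m k = ∅) ∧
    (∀ n m₁ m₂, m₁ < m₂ → m₂ ≤ n →
      (foldCopies Ls m₁ (n - m₁)).Nonempty →
      (foldCopies Ls m₂ (n - m₂)).Nonempty → Ls m₁ < Ls m₂) := by

  have h1 : ∀ m k, (∀ j, m < j → j ≤ m + k → Ls m < Ls j) →
      Ls m / 2 ∈ foldCopies Ls m k ∧
        ∀ d ∈ foldCopies Ls m k, Ls m / 2 ≤ d ∧ d ≤ Ls (m + k) - Ls m / 2 := by
    intro m k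
    induction k with
    | zero =>
      intro _
      refine ⟨by simp [foldCopies], ?_⟩
      intro d hd
      simp only [foldCopies, Set.mem_singleton_iff] at hd
      subst hd
      simp only [Nat.add_zero]
      constructor <;> linarith [hpos m]
    | succ k ih =>
      intro h
      have h' : ∀ j, m < j → j ≤ m + k → Ls m < Ls j := fun j hj hj' => h j hj (by omega)
      obtain ⟨hmem, hbd⟩ := ih h'
      have hlt : Ls m < Ls (m + k + 1) := h (m + k + 1) (by omega) (by omega)
      have hre : Ls (m + (k + 1)) = Ls (m + k + 1) := rfl
      constructor
      · exact Or.inl ⟨hmem, by linarith⟩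
      · intro d hd
        rcases hd with ⟨hd, hdlt⟩ | ⟨e, ⟨he, helt⟩, rfl⟩
        · exact ⟨(hbd d hd).1, by linarith⟩
        · have := (hbd e he).1
          constructor <;> simp <;> linarith
  have h2 : ∀ m k j, m < j → j ≤ m + k → Ls j < Ls m → foldCopies Ls m k = ∅ := by
    intro m k
    induction k with
    | zero => intro j hj hj' _; omega
    | succ k ih =>
      intro j hj hj' hlt
      by_cases hj2 : j ≤ m + k
      · have he : foldCopies Ls m k = ∅ := ih j hj hj2 hlt
        simp [foldCopies, he]
      · have hje : j = m + k + 1 := by omega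
        subst hje
        by_cases hall : ∀ j', m < j' → j' ≤ m + k → Ls m < Ls j'
        · obtain ⟨_, hbd⟩ := h1 m k hall
          ext d
          simp only [foldCopies, Set.mem_union, Set.mem_setOf_eq, Set.mem_image,
            Set.mem_empty_iff_false, iff_false]
          push_neg
          constructor
          · intro hd
            have := (hbd d hd).1
            linarith
          · rintro e ⟨he, helt⟩
            have := (hbd e he).1
            linarith
        · push_neg at hall
          obtain ⟨j', hj'1, hj'2, hj'3⟩ := hall
          have hne : Ls j' ≠ Ls m := fun hh => by have := hinj hh; omega
          have he : foldCopies Ls m k = ∅ := ih j' hj'1 hj'2 (lt_of_le_of_ne hj'3 hne)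
          simp [foldCopies, he]
  refine ⟨h1, h2, ?_⟩
  intro n m₁ m₂ hm hm2 hne1 _
  by_contra hle
  push_neg at hle
  have hne : Ls m₂ ≠ Ls m₁ := fun hh => by have := hinj hh; omega
  have hlt : Ls m₂ < Ls m₁ := lt_of_le_of_ne hle hne
  have he : foldCopies Ls m₁ (n - m₁) = ∅ := h2 m₁ (n - m₁) m₂ hm (by omega) hlt
  rw [he] at hne1
  exact Set.not_nonempty_empty hne1
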